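/- arXiv:2402.05646 — 4 statements merged into one kernel-verified Lean document; each statement's English description precedes it below -/
import Mathlib

section
/- For any self-adjoint operator A bounded below with compact resolvent, with lowest two eigenvalues λ₀ ≤ λ₁, any normalized vector ψ in the domain of A, and any γ with ⟨ψ, Aψ⟩ < γ ≤ λ₁, one has λ₀ ≥ ⟨ψ, Aψ⟩ − (⟨ψ, A²ψ⟩ − ⟨ψ, Aψ⟩²)/(γ − ⟨ψ, Aψ⟩). (Temple's inequality.) -/
/-!
Put `c = (λ₀ + γ) / 2` and `r = (γ - λ₀) / 2`. Since the spectrum of `A` avoids `(λ₀, γ)`, the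
spectrum of `A - c` avoids `(-r, r)`, so that of `(A - c)²` lies in `[r², ∞)`, and therefore
`‖(A - c)ψ‖² ≥ r²`. Expanding, this is `⟪ψ, (A - λ₀)(A - γ)ψ⟫ ≥ 0`, which rearranges to Temple's
bound. The passage from a lower bound on the spectrum of a self-adjoint operator to a lower bound
on its quadratic form rests on the fact that a positive operator has its norm in its spectrum.
-/

open RealInnerProductSpace

theorem spectrum.mem_or_neg_mem_of_sq_mem_spectrum_sq {R A : Type*} [Field R] [Ring A]
    [Algebra R A] {a : A} {s : R} (hs : s ^ 2 ∈ spectrum R (a ^ 2)) :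
    s ∈ spectrum R a ∨ -s ∈ spectrum R a := by
  by_contra! h
  obtain ⟨hpos, hneg⟩ := h
  rw [spectrum.notMem_iff] at hpos hneg
  rw [spectrum.mem_iff] at hs
  apply hs
  have : algebraMap R A (s ^ 2) - a ^ 2 =
      -((algebraMap R A s - a) * (algebraMap R A (-s) - a)) := by
    simp only [sq, map_mul, map_neg, sub_mul, mul_sub, Algebra.commutes s a]
    noncomm_ring
  rw [this]
  exact (hpos.mul hneg).neg

namespace ContinuousLinearMap

theorem IsPositive.norm_mem_spectrum {𝕜 E : Type*} [RCLike 𝕜] [NormedAddCommGroup E]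
    [InnerProductSpace 𝕜 E] [Nontrivial E] {T : E →L[𝕜] E} (hT : T.IsPositive) :
    algebraMap ℝ 𝕜 ‖T‖ ∈ spectrum 𝕜 T := by
  by_contra h
  obtain ⟨ε, hε, hle⟩ :=
    T.rayleighQuotient_le_of_norm_mem_resolventSet (Set.notMem_compl_iff.mp h)
  have : ‖T‖ ≤ ‖T‖ - ε := by
    conv_lhs => rw [T.norm_eq_iSup_rayleighQuotient hT.isSymmetric]
    refine ciSup_le fun x ↦ ?_
    rw [abs_of_nonneg (div_nonneg (hT.2 x) (sq_nonneg _))]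
    exact hle x
  linarith

end ContinuousLinearMap

section Real

variable {E : Type*} [NormedAddCommGroup E] [InnerProductSpace ℝ E]

theorem LinearMap.IsSymmetric.norm_sub_smul_sq {A : E →ₗ[ℝ] E} (hA : A.IsSymmetric)
    (c : ℝ) (x : E) :
    ‖A x - c • x‖ ^ 2 = ⟪x, A (A x)⟫ - 2 * c * ⟪x, A x⟫ + c ^ 2 * ‖x‖ ^ 2 := by
  have hAA : ‖A x‖ ^ 2 = ⟪x, A (A x)⟫ := by
    rw [← real_inner_self_eq_norm_sq]
    exact hA x (A x)
  rw [norm_sub_sq_real, hAA, real_inner_smul_right, norm_smul, mul_pow, Real.norm_eq_abs, sq_abs,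
    real_inner_comm x (A x)]
  ring

variable [CompleteSpace E]

theorem IsSelfAdjoint.mul_norm_sq_le_inner_map_self {T : E →L[ℝ] E} (hT : IsSelfAdjoint T)
    {m : ℝ} (hm : ∀ μ ∈ spectrum ℝ T, m ≤ μ) (x : E) : m * ‖x‖ ^ 2 ≤ ⟪T x, x⟫ := by
  rcases subsingleton_or_nontrivial E with _ | _
  · simp [Subsingleton.elim x 0]
  -- `S` is positive, so `‖S‖ ∈ σ(S)`, i.e. `‖T‖ - ‖S‖ ∈ σ(T)`, and `⟪T x, x⟫ ≥ (‖T‖ - ‖S‖)‖x‖²`.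
  set S := algebraMap ℝ (E →L[ℝ] E) ‖T‖ - T
  have hS_apply (y : E) : ⟪S y, y⟫ = ‖T‖ * ‖y‖ ^ 2 - ⟪T y, y⟫ := by
    simp [S, Algebra.algebraMap_eq_smul_one, inner_sub_left, real_inner_smul_left]
  have hS : S.IsPositive := by
    refine (ContinuousLinearMap.isPositive_iff' S).mpr
      ⟨(IsSelfAdjoint.algebraMap _ (.all _)).sub hT, fun y ↦ ?_⟩
    have := (real_inner_le_norm (T y) y).trans
      (mul_le_mul_of_nonneg_right (T.le_opNorm y) (norm_nonneg y))
    rw [hS_apply]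
    nlinarith
  have hmem : ‖T‖ - ‖S‖ ∈ spectrum ℝ T := by
    have := hS.norm_mem_spectrum
    rw [Algebra.algebraMap_self, RingHom.id_apply, ← spectrum.singleton_sub_eq] at this
    obtain ⟨_, rfl, μ, hμ, hμS⟩ := this
    rwa [← hμS, sub_sub_cancel]
  have hSx : ⟪S x, x⟫ ≤ ‖S‖ * ‖x‖ ^ 2 := by
    have := (real_inner_le_norm (S x) x).trans
      (mul_le_mul_of_nonneg_right (S.le_opNorm x) (norm_nonneg x))
    nlinarith
  calc m * ‖x‖ ^ 2 ≤ (‖T‖ - ‖S‖) * ‖x‖ ^ 2 := by gcongr; exact hm _ hmem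
    _ ≤ ⟪T x, x⟫ := by linarith [hS_apply x]

theorem IsSelfAdjoint.mul_norm_sq_le_norm_map_sq {B : E →L[ℝ] E} (hB : IsSelfAdjoint B)
    {ρ : ℝ} (hρ : ∀ μ ∈ spectrum ℝ B, ρ ≤ μ ^ 2) (x : E) : ρ * ‖x‖ ^ 2 ≤ ‖B x‖ ^ 2 := by
  have hsq (y : E) : ⟪(B ^ 2) y, y⟫ = ‖B y‖ ^ 2 := by
    calc ⟪(B ^ 2) y, y⟫ = ⟪B (B y), y⟫ := by rw [sq]; rfl
      _ = ⟪B y, B y⟫ := hB.isSymmetric (B y) y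
      _ = ‖B y‖ ^ 2 := real_inner_self_eq_norm_sq _
  have hB2 : (B ^ 2).IsPositive :=
    (ContinuousLinearMap.isPositive_iff' _).mpr ⟨hB.pow 2, fun y ↦ hsq y ▸ sq_nonneg _⟩
  refine (hB2.isSelfAdjoint.mul_norm_sq_le_inner_map_self (fun ν hν ↦ ?_) x).trans_eq (hsq x)
  have hν0 : 0 ≤ ν :=
    spectrum_nonneg_of_nonneg ((ContinuousLinearMap.nonneg_iff_isPositive _).mpr hB2) hν
  rw [← Real.sq_sqrt hν0] at hν ⊢
  rcases spectrum.mem_or_neg_mem_of_sq_mem_spectrum_sq hν with h | h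
  · exact hρ _ h
  · simpa using hρ _ h

end Real

theorem temple_inequality_general
    {E : Type*} [NormedAddCommGroup E] [InnerProductSpace ℝ E] [CompleteSpace E]
    (A : E →L[ℝ] E) (hA : IsSelfAdjoint A)
    (lam0 lam1 : ℝ)
    (hspec : spectrum ℝ A ⊆ {lam0} ∪ Set.Ici lam1)
    (ψ : E) (hψ : ‖ψ‖ = 1) (γ : ℝ)
    (h1 : ⟪ψ, A ψ⟫ < γ) (h2 : γ ≤ lam1) :
    lam0 ≥ ⟪ψ, A ψ⟫ - (⟪ψ, A (A ψ)⟫ - ⟪ψ, A ψ⟫ ^ 2) / (γ - ⟪ψ, A ψ⟫) := by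
  have hnorm (c : ℝ) : ‖A ψ - c • ψ‖ ^ 2 = ⟪ψ, A (A ψ)⟫ - 2 * c * ⟪ψ, A ψ⟫ + c ^ 2 := by
    simpa [hψ] using hA.isSymmetric.norm_sub_smul_sq c ψ
  suffices key : (⟪ψ, A ψ⟫ - lam0) * (γ - ⟪ψ, A ψ⟫) ≤ ⟪ψ, A (A ψ)⟫ - ⟪ψ, A ψ⟫ ^ 2 by
    rwa [ge_iff_le, sub_le_comm, le_div_iff₀ (sub_pos.mpr h1)]
  rcases le_or_gt γ lam0 with hγ | hγ
  · nlinarith [hnorm ⟪ψ, A ψ⟫, sq_nonneg ‖A ψ - ⟪ψ, A ψ⟫ • ψ‖]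
  have hgap : ∀ μ ∈ spectrum ℝ (A - algebraMap ℝ _ ((lam0 + γ) / 2)),
      ((γ - lam0) / 2) ^ 2 ≤ μ ^ 2 := by
    intro μ hμ
    rw [← spectrum.sub_singleton_eq] at hμ
    obtain ⟨ν, hν, _, rfl, rfl⟩ := Set.mem_sub.mp hμ
    rcases hspec hν with rfl | hν
    · exact le_of_eq (by ring)
    · have : (γ - lam0) / 2 ≤ ν - (lam0 + γ) / 2 := by linarith [Set.mem_Ici.mp hν]
      exact pow_le_pow_left₀ (by linarith) this 2
  have := (hA.sub (.algebraMap _ (.all _))).mul_norm_sq_le_norm_map_sq hgap ψ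
  rw [hψ, sub_apply, ContinuousLinearMap.algebraMap_apply, hnorm] at this
  nlinarith

/-- **Temple's inequality.** Let `A` be a self-adjoint operator whose spectrum
below `λ₁` consists only of the lowest eigenvalue `λ₀` (this encodes the
assumption of being bounded below with compact resolvent, with lowest two
eigenvalues `λ₀ ≤ λ₁`). Then for any normalized `ψ` and `⟨ψ, Aψ⟩ < γ ≤ λ₁`,
`λ₀ ≥ ⟨ψ, Aψ⟩ − (⟨ψ, A²ψ⟩ − ⟨ψ, Aψ⟩²)/(γ − ⟨ψ, Aψ⟩)`. -/
theorem temple_inequality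
    {E : Type*} [NormedAddCommGroup E] [InnerProductSpace ℝ E] [CompleteSpace E]
    (A : E →L[ℝ] E) (hA : IsSelfAdjoint A)
    (lam0 lam1 : ℝ) (hle : lam0 ≤ lam1)
    (hmem : lam0 ∈ spectrum ℝ A)
    (hspec : spectrum ℝ A ⊆ {lam0} ∪ Set.Ici lam1)
    (ψ : E) (hψ : ‖ψ‖ = 1) (γ : ℝ)
    (h1 : ⟪ψ, A ψ⟫ < γ) (h2 : γ ≤ lam1) :
    lam0 ≥ ⟪ψ, A ψ⟫ - (⟪ψ, A (A ψ)⟫ - ⟪ψ, A ψ⟫ ^ 2) / (γ - ⟪ψ, A ψ⟫) :=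
  temple_inequality_general A hA lam0 lam1 hspec ψ hψ γ h1 h2
end

section
/- Temple's inequality in finite dimensions: let A be a Hermitian matrix with smallest eigenvalue λ₀ and second smallest eigenvalue λ₁ (counted with multiplicity). For any unit vector ψ and any real γ with ⟨ψ, Aψ⟩ < γ ≤ λ₁, one has λ₀ ≥ ⟨ψ, Aψ⟩ − (⟨ψ, A²ψ⟩ − ⟨ψ, Aψ⟩²)/(γ − ⟨ψ, Aψ⟩). -/
open Matrix

/-- Quadratic form of a real diagonal matrix as a real sum. -/
lemma temple_aux_diag {n : ℕ} (f : Fin n → ℝ) (φ : Fin n → ℂ) :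
    (star φ ⬝ᵥ (Matrix.diagonal (fun i => (f i : ℂ))).mulVec φ).re
      = ∑ i, f i * Complex.normSq (φ i) := by
  simp only [dotProduct, Matrix.mulVec_diagonal, Pi.star_apply, Complex.star_def]
  rw [Complex.re_sum]
  refine Finset.sum_congr rfl fun i _ => ?_
  have h : (starRingEnd ℂ) (φ i) * ((f i : ℂ) * φ i)
      = ((f i * Complex.normSq (φ i) : ℝ) : ℂ) := by
    push_cast
    rw [Complex.normSq_eq_conj_mul_self]; ring
  rw [h, Complex.ofReal_re]

/-- **Temple's inequality in finite dimensions.** Let `A` be a Hermitian matrix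
whose smallest eigenvalue is `lam0` (attained at index `i₀`) and all other
eigenvalues (with multiplicity) are at least `lam1`. For any unit vector `ψ`
and real `γ` with `⟨ψ, Aψ⟩ < γ ≤ lam1`, one has
`lam0 ≥ ⟨ψ, Aψ⟩ − (⟨ψ, A²ψ⟩ − ⟨ψ, Aψ⟩²)/(γ − ⟨ψ, Aψ⟩)`. -/
theorem temple_inequality_matrix {n : ℕ}
    (A : Matrix (Fin n) (Fin n) ℂ) (hA : A.IsHermitian)
    (lam0 lam1 : ℝ) (hle : lam0 ≤ lam1)
    (i₀ : Fin n) (h0 : hA.eigenvalues i₀ = lam0)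
    (hmin : ∀ i, lam0 ≤ hA.eigenvalues i)
    (hsecond : ∀ i, i ≠ i₀ → lam1 ≤ hA.eigenvalues i)
    (ψ : Fin n → ℂ) (hψ : star ψ ⬝ᵥ ψ = 1) (γ : ℝ)
    (h1 : (star ψ ⬝ᵥ A.mulVec ψ).re < γ) (h2 : γ ≤ lam1) :
    lam0 ≥ (star ψ ⬝ᵥ A.mulVec ψ).re -
      ((star ψ ⬝ᵥ (A * A).mulVec ψ).re - (star ψ ⬝ᵥ A.mulVec ψ).re ^ 2) /
        (γ - (star ψ ⬝ᵥ A.mulVec ψ).re) := by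
  classical
  set U : Matrix (Fin n) (Fin n) ℂ := (hA.eigenvectorUnitary : Matrix (Fin n) (Fin n) ℂ) with hU
  set lam := hA.eigenvalues with hlam
  have hUU : star U * U = 1 := (Matrix.mem_unitaryGroup_iff').mp hA.eigenvectorUnitary.2
  have hUU' : U * star U = 1 := (Matrix.mem_unitaryGroup_iff).mp hA.eigenvectorUnitary.2
  set φ : Fin n → ℂ := (star U).mulVec ψ with hφ
  set d : Fin n → ℝ := fun i => Complex.normSq (φ i) with hd
  -- general conjugation lemma
  have key : ∀ M : Matrix (Fin n) (Fin n) ℂ,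
      star ψ ⬝ᵥ (U * M * star U).mulVec ψ = star φ ⬝ᵥ M.mulVec φ := by
    intro M
    have hsφ : star φ = star ψ ᵥ* U := by
      rw [hφ, Matrix.star_mulVec]
      -- entrywise
      simp [Matrix.star_eq_conjTranspose]
    rw [hsφ, hφ]
    simp only [Matrix.dotProduct_mulVec, Matrix.vecMul_vecMul]
  have hspec := hA.spectral_theorem
  simp only [Unitary.conjStarAlgAut_apply, Unitary.coe_star] at hspec
  rw [← hU, ← hlam] at hspec
  have hA1 : star ψ ⬝ᵥ A.mulVec ψ
      = star φ ⬝ᵥ (Matrix.diagonal (fun i => (lam i : ℂ))).mulVec φ := by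
    rw [← key]
    congr 1
    rw [hspec]
    rfl
  have hsq : A * A = U * Matrix.diagonal (fun i => ((lam i ^ 2 : ℝ) : ℂ)) * star U := by
    have hDD : Matrix.diagonal (RCLike.ofReal ∘ lam : Fin n → ℂ)
        * Matrix.diagonal (RCLike.ofReal ∘ lam) = Matrix.diagonal (fun i => ((lam i ^ 2 : ℝ) : ℂ)) := by
      rw [Matrix.diagonal_mul_diagonal]
      -- entrywise
      funext i
      simp [Function.comp, pow_two]
    conv_lhs => rw [hspec]
    simp only [Matrix.mul_assoc]
    rw [← Matrix.mul_assoc (star U) U, hUU, Matrix.one_mul,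
      ← Matrix.mul_assoc (Matrix.diagonal _) (Matrix.diagonal _), hDD]
  have hA2 : star ψ ⬝ᵥ (A * A).mulVec ψ
      = star φ ⬝ᵥ (Matrix.diagonal (fun i => ((lam i ^ 2 : ℝ) : ℂ))).mulVec φ := by
    rw [hsq, key]
  have hnorm : star ψ ⬝ᵥ ψ = star φ ⬝ᵥ φ := by
    have h := key 1
    rw [Matrix.mul_one, hUU'] at h
    simpa using h
  -- real sums
  have hsum1 : (∑ i, d i) = 1 := by
    have h : (star φ ⬝ᵥ φ).re = ∑ i, d i := by
      have := temple_aux_diag (fun _ => (1 : ℝ)) φ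
      simpa [Matrix.diagonal_one] using this
    rw [← h, ← hnorm, hψ]
    simp
  have ha : (star ψ ⬝ᵥ A.mulVec ψ).re = ∑ i, lam i * d i := by
    rw [hA1, temple_aux_diag]
  have hb : (star ψ ⬝ᵥ (A * A).mulVec ψ).re = ∑ i, lam i ^ 2 * d i := by
    rw [hA2, temple_aux_diag]
  set a := (star ψ ⬝ᵥ A.mulVec ψ).re with haa
  set b := (star ψ ⬝ᵥ (A * A).mulVec ψ).re with hbb
  have hdpos : ∀ i, 0 ≤ d i := fun i => Complex.normSq_nonneg _
  -- key positivity
  have hkey : 0 ≤ ∑ i, (lam i - γ) * (lam i - lam0) * d i := by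
    apply Finset.sum_nonneg
    intro i _
    by_cases hi : i = i₀
    · subst hi; rw [h0]; simp
    · have h3 := hsecond i hi
      have h4 := hmin i
      have h5 : 0 ≤ (lam i - γ) * (lam i - lam0) := by nlinarith
      exact mul_nonneg h5 (hdpos i)
  have hexp : (∑ i, (lam i - γ) * (lam i - lam0) * d i)
      = b - (γ + lam0) * a + γ * lam0 * 1 := by
    rw [hb, ha, ← hsum1, Finset.mul_sum, Finset.mul_sum, ← Finset.sum_sub_distrib,
      ← Finset.sum_add_distrib]
    refine Finset.sum_congr rfl fun i _ => ?_
    ring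
  rw [hexp] at hkey
  have hγa : 0 < γ - a := by linarith
  have goal2 : (a - lam0) * (γ - a) ≤ b - a ^ 2 := by nlinarith
  have := (le_div_iff₀ hγa).mpr goal2
  linarith
end

section
/- No four-body collision bound: fix n points x₁,…,xₙ ∈ ℝ³ and R > 0. For pairwise distinct i, j, k, define F̃_{ijk} = 1 if |x_i − x_j| ≤ R, |x_i − x_k| ≤ R, and |((x_i+x_j+x_k)/3) − x_m| > 2R for all m ∉ {i,j,k}, and F̃_{ijk} = 0 otherwise. Then for each fixed i, the sum over ordered pairs (j,k) with i, j, k pairwise distinct of F̃_{ijk} is at most 2. -/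
open Finset

noncomputable section

/-- The cut-off `F̃_{ijk}`: indicator that `|x_i − x_j| ≤ R`, `|x_i − x_k| ≤ R`
and all other points lie at distance `> 2R` from the barycentre
`(x_i + x_j + x_k)/3`. -/
def Ftriple {n : ℕ} (x : Fin n → EuclideanSpace ℝ (Fin 3)) (R : ℝ)
    (i j k : Fin n) : ℝ :=
  if dist (x i) (x j) ≤ R ∧ dist (x i) (x k) ≤ R ∧
      (∀ m, m ≠ i → m ≠ j → m ≠ k →
        2 * R < dist ((3 : ℝ)⁻¹ • (x i + x j + x k)) (x m))
    then 1 else 0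

lemma bary_dist {E : Type*} [NormedAddCommGroup E] [NormedSpace ℝ E]
    (a b c : E) : dist ((3:ℝ)⁻¹ • (a + b + c)) a ≤ (dist a b + dist a c) / 3 := by
  rw [dist_eq_norm]
  have h : (3:ℝ)⁻¹ • (a + b + c) - a = (3:ℝ)⁻¹ • ((b - a) + (c - a)) := by
    module
  rw [h, norm_smul, dist_comm a b, dist_comm a c, dist_eq_norm, dist_eq_norm]
  have h1 := norm_add_le (b - a) (c - a)
  have h2 : ‖(3:ℝ)⁻¹‖ = 3⁻¹ := by
    rw [Real.norm_eq_abs]; norm_num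
  rw [h2]
  linarith

/-- **No four-body collision bound**: for each fixed `i`, the sum over ordered
pairs `(j,k)` with `i, j, k` pairwise distinct of `F̃_{ijk}` is at most `2`. -/
theorem no_four_body_collision {n : ℕ} (x : Fin n → EuclideanSpace ℝ (Fin 3))
    (R : ℝ) (hR : 0 < R) (i : Fin n) :
    ∑ p ∈ univ.filter
        (fun p : Fin n × Fin n => p.1 ≠ i ∧ p.2 ≠ i ∧ p.1 ≠ p.2),
      Ftriple x R i p.1 p.2 ≤ 2 := by
  classical
  set cond : Fin n → Fin n → Prop := fun j k =>
    dist (x i) (x j) ≤ R ∧ dist (x i) (x k) ≤ R ∧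
      (∀ m, m ≠ i → m ≠ j → m ≠ k →
        2 * R < dist ((3 : ℝ)⁻¹ • (x i + x j + x k)) (x m)) with hcond
  -- key: a point distinct from i, j, k within R of x i contradicts cond j k
  have key : ∀ j k m : Fin n, cond j k → m ≠ i → dist (x i) (x m) ≤ R →
      m = j ∨ m = k := by
    intro j k m hjk hmi hm
    by_contra hcon
    push_neg at hcon
    obtain ⟨hj, hk, hfar⟩ := hjk
    have h1 := hfar m hmi hcon.1 hcon.2
    have h2 := bary_dist (x i) (x j) (x k)
    have h3 := dist_triangle ((3:ℝ)⁻¹ • (x i + x j + x k)) (x i) (x m)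
    linarith
  -- pairs with nonzero Ftriple are determined up to swap
  have key2 : ∀ p q : Fin n × Fin n, p.1 ≠ i → p.2 ≠ i → p.1 ≠ p.2 →
      q.1 ≠ i → q.2 ≠ i → q.1 ≠ q.2 →
      cond p.1 p.2 → cond q.1 q.2 → q = p ∨ q = (p.2, p.1) := by
    intro p q hp1 hp2 hp12 hq1 hq2 hq12 hp hq
    have h1 : q.1 = p.1 ∨ q.1 = p.2 := key p.1 p.2 q.1 hp hq1 hq.1
    have h2 : q.2 = p.1 ∨ q.2 = p.2 := key p.1 p.2 q.2 hp hq2 hq.2.1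
    rcases h1 with h1 | h1 <;> rcases h2 with h2 | h2
    · exact absurd (h1.trans h2.symm) hq12
    · left; exact Prod.ext h1 h2
    · right; exact Prod.ext h1 h2
    · exact absurd (h1.trans h2.symm) hq12
  set S := univ.filter
      (fun p : Fin n × Fin n => p.1 ≠ i ∧ p.2 ≠ i ∧ p.1 ≠ p.2) with hS
  set T := S.filter (fun p => Ftriple x R i p.1 p.2 ≠ 0) with hTdef
  have hsum : ∑ p ∈ S, Ftriple x R i p.1 p.2 = ∑ p ∈ T, Ftriple x R i p.1 p.2 :=
    (Finset.sum_filter_ne_zero S).symm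
  have hone : ∀ p ∈ T, Ftriple x R i p.1 p.2 = 1 := by
    intro p hp
    rw [hTdef, Finset.mem_filter] at hp
    have h0 := hp.2
    unfold Ftriple at h0 ⊢
    split_ifs at h0 ⊢ with h
    · rfl
    · exact absurd rfl h0
  have hcondT : ∀ p ∈ T, cond p.1 p.2 := by
    intro p hp
    rw [hTdef, Finset.mem_filter] at hp
    have h0 := hp.2
    unfold Ftriple at h0
    by_contra h
    rw [hcond] at h
    simp only at h
    rw [if_neg h] at h0
    exact h0 rfl
  have hmemS : ∀ p ∈ T, p.1 ≠ i ∧ p.2 ≠ i ∧ p.1 ≠ p.2 := by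
    intro p hp
    rw [hTdef, Finset.mem_filter, hS, Finset.mem_filter] at hp
    exact hp.1.2
  have hcard : (T.card : ℝ) ≤ 2 := by
    rcases Finset.eq_empty_or_nonempty T with h | ⟨p, hp⟩
    · simp [h]
    · have hsub : T ⊆ {p, (p.2, p.1)} := by
        intro q hq
        obtain ⟨hp1, hp2, hp12⟩ := hmemS p hp
        obtain ⟨hq1, hq2, hq12⟩ := hmemS q hq
        rcases key2 p q hp1 hp2 hp12 hq1 hq2 hq12 (hcondT p hp) (hcondT q hq) with
          h | h <;> simp [h]
      have := Finset.card_le_card hsub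
      have h2 : ({p, (p.2, p.1)} : Finset (Fin n × Fin n)).card ≤ 2 :=
        Finset.card_insert_le _ _ |>.trans (by simp)
      exact_mod_cast this.trans h2
  calc ∑ p ∈ S, Ftriple x R i p.1 p.2 = ∑ p ∈ T, Ftriple x R i p.1 p.2 := hsum
    _ = ∑ p ∈ T, (1 : ℝ) := Finset.sum_congr rfl hone
    _ = T.card := by simp
    _ ≤ 2 := hcard

end
end

section
/- Change of variables identity for the three-body kinetic energy: for f̃ : ℝ⁶ → ℝ continuously differentiable and x₁, x₂, x₃ ∈ ℝ³, writing F(x₁,x₂,x₃) = f̃(x₁ − x₂, x₁ − x₃), one has |∇_{x₁}F|² + |∇_{x₂}F|² + |∇_{x₃}F|² = 2|(M ∇_{ℝ⁶} f̃)(x₁ − x₂, x₁ − x₃)|², where M is the 6×6 block matrix acting on ℝ³ × ℝ³ given by M = (1/(2√2))[[(√3+1)I₃, (√3−1)I₃],[(√3−1)I₃, (√3+1)I₃]]. -/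
open Real

section Aux

variable {E : Type*} [NormedAddCommGroup E] [InnerProductSpace ℝ E] [CompleteSpace E]

theorem aux_grad (f : E → E → ℝ)
    (hf : ContDiff ℝ 1 (fun p : E × E => f p.1 p.2))
    (x₁ x₂ x₃ : E) :
    ∃ g₁ g₂ : E,
      g₁ = gradient (fun u => f u (x₁ - x₃)) (x₁ - x₂) ∧
      g₂ = gradient (fun v => f (x₁ - x₂) v) (x₁ - x₃) ∧
      gradient (fun y => f (y - x₂) (y - x₃)) x₁ = g₁ + g₂ ∧
      gradient (fun y => f (x₁ - y) (x₁ - x₃)) x₂ = -g₁ ∧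
      gradient (fun y => f (x₁ - x₂) (x₁ - y)) x₃ = -g₂ := by
  have hdiff : DifferentiableAt ℝ (fun p : E × E => f p.1 p.2) (x₁ - x₂, x₁ - x₃) :=
    (hf.differentiable one_ne_zero).differentiableAt
  obtain ⟨D, hD⟩ : ∃ D : E × E →L[ℝ] ℝ,
      HasFDerivAt (fun p : E × E => f p.1 p.2) D (x₁ - x₂, x₁ - x₃) :=
    ⟨_, hdiff.hasFDerivAt⟩
  have h1' : HasFDerivAt (fun u : E => f u (x₁ - x₃))
      (D.comp (ContinuousLinearMap.inl ℝ E E)) (x₁ - x₂) := by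
    have h : HasFDerivAt (fun u : E => (u, x₁ - x₃))
        ((ContinuousLinearMap.id ℝ E).prod 0) (x₁ - x₂) :=
      HasFDerivAt.prodMk (hasFDerivAt_id _) (hasFDerivAt_const _ _)
    have := hD.comp (x₁ - x₂) h
    exact this
  have h2' : HasFDerivAt (fun v : E => f (x₁ - x₂) v)
      (D.comp (ContinuousLinearMap.inr ℝ E E)) (x₁ - x₃) := by
    have h : HasFDerivAt (fun v : E => (x₁ - x₂, v))
        ((0 : E →L[ℝ] E).prod (ContinuousLinearMap.id ℝ E)) (x₁ - x₃) :=
      HasFDerivAt.prodMk (hasFDerivAt_const _ _) (hasFDerivAt_id _)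
    have := hD.comp (x₁ - x₃) h
    exact this
  set g₁ : E := gradient (fun u => f u (x₁ - x₃)) (x₁ - x₂) with hg₁def
  set g₂ : E := gradient (fun v => f (x₁ - x₂) v) (x₁ - x₃) with hg₂def
  have hg₁ : HasGradientAt (fun u => f u (x₁ - x₃)) g₁ (x₁ - x₂) :=
    h1'.differentiableAt.hasGradientAt
  have hg₂ : HasGradientAt (fun v => f (x₁ - x₂) v) g₂ (x₁ - x₃) :=
    h2'.differentiableAt.hasGradientAt
  have e₁ : (InnerProductSpace.toDual ℝ E) g₁ = D.comp (ContinuousLinearMap.inl ℝ E E) :=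
    hg₁.hasFDerivAt.unique h1'
  have e₂ : (InnerProductSpace.toDual ℝ E) g₂ = D.comp (ContinuousLinearMap.inr ℝ E E) :=
    hg₂.hasFDerivAt.unique h2'
  refine ⟨g₁, g₂, rfl, rfl, ?_, ?_, ?_⟩
  · have h : HasFDerivAt (fun y : E => f (y - x₂) (y - x₃))
        (D.comp ((ContinuousLinearMap.id ℝ E).prod (ContinuousLinearMap.id ℝ E))) x₁ := by
      have h : HasFDerivAt (fun y : E => (y - x₂, y - x₃))
          ((ContinuousLinearMap.id ℝ E).prod (ContinuousLinearMap.id ℝ E)) x₁ :=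
        HasFDerivAt.prodMk (((hasFDerivAt_id x₁).sub_const x₂)) ((hasFDerivAt_id x₁).sub_const x₃)
      exact hD.comp x₁ h
    have key : (InnerProductSpace.toDual ℝ E) (g₁ + g₂)
        = D.comp ((ContinuousLinearMap.id ℝ E).prod (ContinuousLinearMap.id ℝ E)) := by
      rw [map_add, e₁, e₂]
      ext w
      simp [← map_add D]
    rw [h.hasGradientAt.gradient, ← key, LinearIsometryEquiv.symm_apply_apply]
  · have h : HasFDerivAt (fun y : E => f (x₁ - y) (x₁ - x₃))
        (D.comp ((-(ContinuousLinearMap.id ℝ E)).prod 0)) x₂ := by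
      have h : HasFDerivAt (fun y : E => (x₁ - y, x₁ - x₃))
          ((-(ContinuousLinearMap.id ℝ E)).prod 0) x₂ :=
        HasFDerivAt.prodMk (((hasFDerivAt_id x₂).const_sub x₁)) (hasFDerivAt_const _ _)
      exact hD.comp x₂ h
    have key : (InnerProductSpace.toDual ℝ E) (-g₁)
        = D.comp ((-(ContinuousLinearMap.id ℝ E)).prod 0) := by
      rw [map_neg, e₁]
      ext w
      have : D (-w, 0) = - D (w, 0) := by rw [← map_neg D]; norm_num
      simp [this]
    rw [h.hasGradientAt.gradient, ← key, LinearIsometryEquiv.symm_apply_apply]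
  · have h : HasFDerivAt (fun y : E => f (x₁ - x₂) (x₁ - y))
        (D.comp ((0 : E →L[ℝ] E).prod (-(ContinuousLinearMap.id ℝ E)))) x₃ := by
      have h : HasFDerivAt (fun y : E => (x₁ - x₂, x₁ - y))
          ((0 : E →L[ℝ] E).prod (-(ContinuousLinearMap.id ℝ E))) x₃ :=
        HasFDerivAt.prodMk (hasFDerivAt_const _ _) (((hasFDerivAt_id x₃).const_sub x₁))
      exact hD.comp x₃ h
    have key : (InnerProductSpace.toDual ℝ E) (-g₂)
        = D.comp ((0 : E →L[ℝ] E).prod (-(ContinuousLinearMap.id ℝ E))) := by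
      rw [map_neg, e₂]
      ext w
      have : D (0, -w) = - D (0, w) := by rw [← map_neg D]; norm_num
      simp [this]
    rw [h.hasGradientAt.gradient, ← key, LinearIsometryEquiv.symm_apply_apply]



theorem aux_alg {E : Type*} [NormedAddCommGroup E] [InnerProductSpace ℝ E]
    (g₁ g₂ : E) :
    ‖g₁ + g₂‖ ^ 2 + ‖-g₁‖ ^ 2 + ‖-g₂‖ ^ 2 =
      2 * (‖((Real.sqrt 3 + 1) / (2 * Real.sqrt 2)) • g₁ +
            ((Real.sqrt 3 - 1) / (2 * Real.sqrt 2)) • g₂‖ ^ 2 +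
          ‖((Real.sqrt 3 - 1) / (2 * Real.sqrt 2)) • g₁ +
            ((Real.sqrt 3 + 1) / (2 * Real.sqrt 2)) • g₂‖ ^ 2) := by
  have h3 : Real.sqrt 3 ^ 2 = 3 := Real.sq_sqrt (by norm_num)
  have h2 : Real.sqrt 2 ^ 2 = 2 := Real.sq_sqrt (by norm_num)
  have h2p : (0:ℝ) < Real.sqrt 2 := Real.sqrt_pos.mpr (by norm_num)
  have h3ge : (1:ℝ) ≤ Real.sqrt 3 := by nlinarith [Real.sqrt_nonneg 3]
  set a : ℝ := (Real.sqrt 3 + 1) / (2 * Real.sqrt 2) with hadef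
  set b : ℝ := (Real.sqrt 3 - 1) / (2 * Real.sqrt 2) with hbdef
  have ha : 0 ≤ a := by positivity
  have hb : 0 ≤ b := by
    apply div_nonneg (by linarith) (by positivity)
  have ha2 : a ^ 2 + b ^ 2 = 1 := by
    rw [hadef, hbdef]
    rw [div_pow, div_pow, ← add_div, mul_pow]
    rw [div_eq_one_iff_eq (by positivity)]
    nlinarith [h3, h2]
  have hab : a * b = 1 / 4 := by
    rw [hadef, hbdef, div_mul_div_comm]
    rw [div_eq_iff (by positivity)]
    nlinarith [h3, h2]
  rw [norm_neg, norm_neg, @norm_add_sq_real, @norm_add_sq_real, @norm_add_sq_real,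
      norm_smul, norm_smul, norm_smul, norm_smul,
      real_inner_smul_left, real_inner_smul_right, real_inner_smul_left, real_inner_smul_right,
      Real.norm_eq_abs, Real.norm_eq_abs, abs_of_nonneg ha, abs_of_nonneg hb]
  clear hadef hbdef
  clear_value a b
  linear_combination (-2 * ‖g₁‖ ^ 2 - 2 * ‖g₂‖ ^ 2) * ha2 + (-8 * (inner ℝ g₁ g₂ : ℝ)) * hab

end Aux

/-- Change of variables identity for the three-body kinetic energy: for a `C¹`
function `f̃ : ℝ³ × ℝ³ → ℝ` and `F(x₁,x₂,x₃) = f̃(x₁ − x₂, x₁ − x₃)`,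
`|∇_{x₁}F|² + |∇_{x₂}F|² + |∇_{x₃}F|² = 2|(M ∇f̃)(x₁ − x₂, x₁ − x₃)|²`,
where `M` is the block matrix built from `(1/(2√2))[[√3+1, √3−1],[√3−1, √3+1]]`
tensored with the 3×3 identity; i.e. `M∇f̃ = (a∇₁f̃ + b∇₂f̃, b∇₁f̃ + a∇₂f̃)` with
`a = (√3+1)/(2√2)` and `b = (√3−1)/(2√2)`. -/
theorem three_body_kinetic_change_of_variables
    (f : EuclideanSpace ℝ (Fin 3) → EuclideanSpace ℝ (Fin 3) → ℝ)
    (hf : ContDiff ℝ 1 (fun p : EuclideanSpace ℝ (Fin 3) × EuclideanSpace ℝ (Fin 3) =>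
      f p.1 p.2))
    (x₁ x₂ x₃ : EuclideanSpace ℝ (Fin 3)) :
    ‖gradient (fun y => f (y - x₂) (y - x₃)) x₁‖ ^ 2 +
        ‖gradient (fun y => f (x₁ - y) (x₁ - x₃)) x₂‖ ^ 2 +
        ‖gradient (fun y => f (x₁ - x₂) (x₁ - y)) x₃‖ ^ 2 =
      2 *
        (‖((Real.sqrt 3 + 1) / (2 * Real.sqrt 2)) •
              gradient (fun u => f u (x₁ - x₃)) (x₁ - x₂) +
            ((Real.sqrt 3 - 1) / (2 * Real.sqrt 2)) •
              gradient (fun v => f (x₁ - x₂) v) (x₁ - x₃)‖ ^ 2 +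
          ‖((Real.sqrt 3 - 1) / (2 * Real.sqrt 2)) •
              gradient (fun u => f u (x₁ - x₃)) (x₁ - x₂) +
            ((Real.sqrt 3 + 1) / (2 * Real.sqrt 2)) •
              gradient (fun v => f (x₁ - x₂) v) (x₁ - x₃)‖ ^ 2) := by
  obtain ⟨g₁, g₂, e1, e2, h1, h2, h3⟩ := aux_grad f hf x₁ x₂ x₃
  rw [h1, h2, h3, ← e1, ← e2]
  exact aux_alg g₁ g₂
end
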